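/- arXiv:2205.03199 — 3 statements merged into one kernel-verified Lean document; each statement's English description precedes it below -/
import Mathlib

section
/- For k dividing d, the KL divergence between the centered Gaussians with covariances Σ^{(d,k)}_{σ,ε} and its block-diagonal part Σ^{(d,k)}_σ equals KL(f_{Σ^{(d,k)}_{σ,ε}} ‖ f_{Σ^{(d,k)}_σ}) = −(1/2) log(1 + (d−k)ε/(1+(k−1)σ)) − (1/2)(d/k − 1) log(1 − kε/(1+(k−1)σ)), provided both matrices are positive definite. -/
/-!
Write `B = Σ^{(d,k)}_σ` and `A = Σ^{(d,k)}_{σ,ε}`. The KL divergence between centered Gaussians is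
`½ (tr (B⁻¹A) - d - log det (B⁻¹A))`: the substitution `x = A^{1/2} y` turns the log-ratio, an
affine function of the quadratic form `xᵀ (B⁻¹ - A⁻¹) x`, into a question about moments of the
standard Gaussian.

Grouping the `d` indices into `d / k` blocks of size `k`, `A = B + ε K` with `K` the all-ones
matrix off the diagonal blocks. The row sums of `B` inside a block are all
`s = 1 + (k - 1) σ`, so `B K = s K` and `B⁻¹ A = 1 + (ε / s) K`. As `K` has zero diagonal the
trace is `d`, and `K = U V` with `V U = k (J - 1)` on the blocks, so Sylvester's identity
`det (1 + U V) = det (1 + V U)` reduces the determinant to that of a `(d / k) × (d / k)` matrix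
with constant off-diagonal entries: `(1 - k ε / s) ^ (d / k - 1) * (1 + (d - k) ε / s)`.
-/

open Real MeasureTheory Matrix

noncomputable def gaussianDensity {d : ℕ} (S0 : Matrix (Fin d) (Fin d) ℝ)
    (x : Fin d → ℝ) : ℝ :=
  (2 * Real.pi) ^ (-(d : ℝ) / 2) * S0.det ^ (-(1 : ℝ) / 2) *
    Real.exp (-(dotProduct x (S0⁻¹.mulVec x)) / 2)

/-- The matrix `Σ^{(d,k)}_{σ,ε}`: `1` on the diagonal, `σ` within consecutive blocks of
size `k`, and `ε` in all off-block entries. -/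
noncomputable def SigmaMat (d k : ℕ) (σ ε : ℝ) : Matrix (Fin d) (Fin d) ℝ :=
  fun i j =>
    if i = j then 1
    else if (i : ℕ) / k = (j : ℕ) / k then σ
    else ε

section StdGaussian

lemma integrable_pow_mul_exp_neg_half_sq (n : ℕ) :
    Integrable fun t : ℝ => t ^ n * exp (-(1 / 2) * t ^ 2) := by
  simpa [rpow_natCast] using integrable_rpow_mul_exp_neg_mul_sq (b := 1 / 2) (by norm_num)
    (s := n) (by linarith [n.cast_nonneg (α := ℝ)])

lemma integral_exp_neg_half_sq : ∫ t : ℝ, exp (-(1 / 2) * t ^ 2) = √(2 * π) := by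
  rw [integral_gaussian, div_div_eq_mul_div, div_one, mul_comm]

lemma integral_mul_exp_neg_half_sq : ∫ t : ℝ, t * exp (-(1 / 2) * t ^ 2) = 0 := by
  have h := integral_neg_eq_self (fun t : ℝ => t * exp (-(1 / 2) * t ^ 2)) volume
  simp only [neg_mul, even_two.neg_pow, integral_neg] at h ⊢
  linarith

lemma integral_sq_mul_exp_neg_half_sq :
    ∫ t : ℝ, t ^ 2 * exp (-(1 / 2) * t ^ 2) = √(2 * π) := by
  have hderiv (t : ℝ) : HasDerivAt (fun t => t * exp (-(1 / 2) * t ^ 2))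
      (t ^ 0 * exp (-(1 / 2) * t ^ 2) - t ^ 2 * exp (-(1 / 2) * t ^ 2)) t := by
    have := (hasDerivAt_id' t).mul (((hasDerivAt_pow 2 t).const_mul (-(1 / 2) : ℝ)).exp)
    exact this.congr_deriv (by simp only [Nat.cast_ofNat, pow_zero]; ring)
  have h0 := integral_eq_zero_of_hasDerivAt_of_integrable hderiv
    ((integrable_pow_mul_exp_neg_half_sq 0).sub (integrable_pow_mul_exp_neg_half_sq 2))
    (by simpa using integrable_pow_mul_exp_neg_half_sq 1)
  rw [integral_sub (integrable_pow_mul_exp_neg_half_sq 0)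
    (integrable_pow_mul_exp_neg_half_sq 2)] at h0
  simp only [pow_zero, one_mul, integral_exp_neg_half_sq] at h0
  linarith

variable {ι : Type*} [Fintype ι]

noncomputable def stdGaussianWeight (y : ι → ℝ) : ℝ := ∏ i, exp (-(1 / 2) * y i ^ 2)

lemma stdGaussianWeight_eq_exp (y : ι → ℝ) : stdGaussianWeight y = exp (-(y ⬝ᵥ y) / 2) := by
  rw [stdGaussianWeight, ← exp_sum]
  congr 1
  simp only [dotProduct, Finset.sum_div, ← Finset.sum_neg_distrib]
  exact Finset.sum_congr rfl fun i _ => by ring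

lemma integrable_stdGaussianWeight : Integrable fun y : ι → ℝ => stdGaussianWeight y :=
  Integrable.fintype_prod fun _ => integrable_exp_neg_mul_sq (b := 1 / 2) (by norm_num)

lemma integral_stdGaussianWeight :
    ∫ y : ι → ℝ, stdGaussianWeight y = √(2 * π) ^ Fintype.card ι := by
  rw [← integral_exp_neg_half_sq, ← integral_fintype_prod_eq_pow]
  rfl

lemma dotProduct_mulVec_mul_eq_sum (N : Matrix ι ι ℝ) (y : ι → ℝ) (c : ℝ) :
    y ⬝ᵥ N *ᵥ y * c = ∑ i, ∑ j, N i j * (y i * y j * c) := by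
  simp only [dotProduct, mulVec, Finset.sum_mul, Finset.mul_sum]
  exact Finset.sum_congr rfl fun i _ => Finset.sum_congr rfl fun j _ => by ring

variable [DecidableEq ι]

lemma mul_mul_stdGaussianWeight_eq_prod (i j : ι) (y : ι → ℝ) :
    y i * y j * stdGaussianWeight y = ∏ l,
      y l ^ ((if l = i then 1 else 0) + (if l = j then 1 else 0)) * exp (-(1 / 2) * y l ^ 2) := by
  simp only [stdGaussianWeight, Finset.prod_mul_distrib, pow_add, pow_ite, pow_one, pow_zero,
    Finset.prod_ite_eq', Finset.mem_univ, if_true]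

lemma integrable_mul_mul_stdGaussianWeight (i j : ι) :
    Integrable fun y : ι → ℝ => y i * y j * stdGaussianWeight y := by
  simp_rw [mul_mul_stdGaussianWeight_eq_prod i j]
  exact Integrable.fintype_prod fun l => integrable_pow_mul_exp_neg_half_sq _

lemma integral_mul_mul_stdGaussianWeight (i j : ι) :
    ∫ y : ι → ℝ, y i * y j * stdGaussianWeight y =
      if i = j then √(2 * π) ^ Fintype.card ι else 0 := by
  simp_rw [mul_mul_stdGaussianWeight_eq_prod i j]
  rw [volume_pi, integral_fintype_prod_eq_prod (f := fun l t =>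
    t ^ ((if l = i then 1 else 0) + (if l = j then 1 else 0)) * exp (-(1 / 2) * t ^ 2))]
  split_ifs with hij
  · subst hij
    rw [← Finset.card_univ, ← Finset.prod_const]
    refine Finset.prod_congr rfl fun l _ => ?_
    by_cases hl : l = i
    · simpa [hl] using integral_sq_mul_exp_neg_half_sq
    · simpa [hl] using integral_exp_neg_half_sq
  · exact Finset.prod_eq_zero (Finset.mem_univ i)
      (by simpa [hij] using integral_mul_exp_neg_half_sq)

lemma integrable_dotProduct_mulVec_mul_stdGaussianWeight (N : Matrix ι ι ℝ) :
    Integrable fun y : ι → ℝ => y ⬝ᵥ N *ᵥ y * stdGaussianWeight y := by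
  simp_rw [dotProduct_mulVec_mul_eq_sum]
  exact integrable_finsetSum _ fun i _ => integrable_finsetSum _ fun j _ =>
    (integrable_mul_mul_stdGaussianWeight i j).const_mul _

lemma integral_dotProduct_mulVec_mul_stdGaussianWeight (N : Matrix ι ι ℝ) :
    ∫ y : ι → ℝ, y ⬝ᵥ N *ᵥ y * stdGaussianWeight y = N.trace * √(2 * π) ^ Fintype.card ι := by
  simp_rw [dotProduct_mulVec_mul_eq_sum]
  rw [integral_finsetSum _ fun i _ => integrable_finsetSum _ fun j _ =>
    (integrable_mul_mul_stdGaussianWeight i j).const_mul (N i j)]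
  simp_rw [integral_finsetSum _ fun j _ => (integrable_mul_mul_stdGaussianWeight _ j).const_mul _,
    integral_const_mul, integral_mul_mul_stdGaussianWeight]
  simp [trace, Finset.sum_mul]

end StdGaussian

lemma integral_eq_abs_det_smul_integral_mulVec {ι E : Type*} [Fintype ι] [DecidableEq ι]
    [NormedAddCommGroup E] [NormedSpace ℝ E] {L : Matrix ι ι ℝ} (hL : L.det ≠ 0)
    {f : (ι → ℝ) → E} (hf : Continuous f) :
    ∫ x, f x = |L.det| • ∫ y, f (L *ᵥ y) := by
  have hmap : Measure.map (toLin' L) volume = ENNReal.ofReal |L.det|⁻¹ • volume := by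
    simpa [abs_inv] using Real.map_matrix_volume_pi_eq_smul_volume_pi hL
  have h := integral_map (μ := volume) (LinearMap.continuous_on_pi (toLin' L)).aemeasurable
    hf.aestronglyMeasurable
  rw [hmap, integral_smul_measure, ENNReal.toReal_ofReal (by positivity)] at h
  simp only [toLin'_apply] at h
  rw [← h, smul_smul, mul_inv_cancel₀ (abs_ne_zero.mpr hL), one_smul]

lemma dotProduct_mulVec_conj {ι R : Type*} [Fintype ι] [CommSemiring R] (L M : Matrix ι ι R)
    (y : ι → R) : L *ᵥ y ⬝ᵥ M *ᵥ (L *ᵥ y) = y ⬝ᵥ (Lᵀ * M * L) *ᵥ y := by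
  rw [← mulVec_mulVec, ← mulVec_mulVec, dotProduct_mulVec y Lᵀ, vecMul_transpose]

lemma rpow_neg_natCast_div_two {x : ℝ} (hx : 0 ≤ x) (n : ℕ) :
    x ^ (-(n : ℝ) / 2) = (√x ^ n)⁻¹ := by
  rw [sqrt_eq_rpow, ← rpow_natCast, ← rpow_mul hx, neg_div, rpow_neg hx]
  ring_nf

section GaussianDensity

variable {d : ℕ}

lemma gaussianDensity_pos {A : Matrix (Fin d) (Fin d) ℝ} (hA : 0 < A.det) (x : Fin d → ℝ) :
    0 < gaussianDensity A x := by
  unfold gaussianDensity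
  positivity

@[fun_prop]
lemma continuous_gaussianDensity (A : Matrix (Fin d) (Fin d) ℝ) :
    Continuous (gaussianDensity A) := by
  unfold gaussianDensity
  fun_prop

lemma log_gaussianDensity_div {A B : Matrix (Fin d) (Fin d) ℝ} (hA : 0 < A.det) (hB : 0 < B.det)
    (x : Fin d → ℝ) :
    log (gaussianDensity A x / gaussianDensity B x) =
      (log B.det - log A.det) / 2 + (x ⬝ᵥ B⁻¹ *ᵥ x - x ⬝ᵥ A⁻¹ *ᵥ x) / 2 := by
  rw [log_div (gaussianDensity_pos hA x).ne' (gaussianDensity_pos hB x).ne']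
  unfold gaussianDensity
  rw [log_mul (by positivity) (exp_ne_zero _), log_mul (by positivity) (exp_ne_zero _),
    log_mul (by positivity) (by positivity), log_mul (by positivity) (by positivity),
    log_exp, log_exp, log_rpow hA, log_rpow hB]
  ring

open scoped MatrixOrder in
lemma gaussianDensity_sqrt_mulVec {A : Matrix (Fin d) (Fin d) ℝ} (hA : A.PosDef)
    (y : Fin d → ℝ) :
    gaussianDensity A (CFC.sqrt A *ᵥ y) = (√(2 * π) ^ d * √A.det)⁻¹ * stdGaussianWeight y := by
  set L := CFC.sqrt A
  have hLT : Lᵀ = L := by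
    simpa [IsHermitian, conjTranspose_eq_transpose_of_trivial] using
      (CFC.sqrt_nonneg A).posSemidef.1
  have hL : L * L = A := CFC.sqrt_mul_sqrt_self A hA.posSemidef.nonneg
  have hdetL : IsUnit L.det := by
    refine isUnit_iff_ne_zero.mpr fun h => hA.det_pos.ne' ?_
    rw [← hL, det_mul, h, zero_mul]
  have hLA : Lᵀ * A⁻¹ * L = 1 := by
    rw [hLT, ← hL, Matrix.mul_inv_rev, Matrix.mul_assoc, Matrix.mul_assoc,
      nonsing_inv_mul _ hdetL, Matrix.mul_one, mul_nonsing_inv _ hdetL]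
  rw [gaussianDensity, dotProduct_mulVec_conj, hLA, one_mulVec, ← stdGaussianWeight_eq_exp,
    rpow_neg_natCast_div_two (by positivity), ← Nat.cast_one,
    rpow_neg_natCast_div_two hA.det_pos.le]
  ring

open scoped MatrixOrder in
lemma integral_const_add_dotProduct_mulVec_mul_gaussianDensity {A : Matrix (Fin d) (Fin d) ℝ}
    (hA : A.PosDef) (c : ℝ) (N : Matrix (Fin d) (Fin d) ℝ) :
    ∫ x, (c + x ⬝ᵥ N *ᵥ x) * gaussianDensity A x = c + (N * A).trace := by
  set L := CFC.sqrt A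
  have hLT : Lᵀ = L := by
    simpa [IsHermitian, conjTranspose_eq_transpose_of_trivial] using
      (CFC.sqrt_nonneg A).posSemidef.1
  have hL : L * L = A := CFC.sqrt_mul_sqrt_self A hA.posSemidef.nonneg
  have hdetL : L.det = √A.det := by simpa using hA.posSemidef.det_sqrt
  have hdetA : 0 < √A.det := sqrt_pos.mpr hA.det_pos
  have hpt (y : Fin d → ℝ) : (c + L *ᵥ y ⬝ᵥ N *ᵥ (L *ᵥ y)) * gaussianDensity A (L *ᵥ y) =
      (√(2 * π) ^ d * √A.det)⁻¹ *
        (c * stdGaussianWeight y + y ⬝ᵥ (L * N * L) *ᵥ y * stdGaussianWeight y) := by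
    rw [gaussianDensity_sqrt_mulVec hA, dotProduct_mulVec_conj, hLT]
    ring
  rw [integral_eq_abs_det_smul_integral_mulVec (L := L) (by rw [hdetL]; exact hdetA.ne')
    (f := fun x => (c + x ⬝ᵥ N *ᵥ x) * gaussianDensity A x) (by fun_prop)]
  simp_rw [hpt]
  rw [integral_const_mul, integral_add (integrable_stdGaussianWeight.const_mul c)
    (integrable_dotProduct_mulVec_mul_stdGaussianWeight _), integral_const_mul,
    integral_stdGaussianWeight, integral_dotProduct_mulVec_mul_stdGaussianWeight,
    Fintype.card_fin, trace_mul_comm, ← Matrix.mul_assoc, hL, trace_mul_comm, hdetL,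
    abs_of_pos hdetA, smul_eq_mul]
  field_simp

theorem integral_log_gaussianDensity_div_mul {A B : Matrix (Fin d) (Fin d) ℝ} (hA : A.PosDef)
    (hB : B.PosDef) :
    ∫ x, log (gaussianDensity A x / gaussianDensity B x) * gaussianDensity A x =
      ((B⁻¹ * A).trace - d - log (B⁻¹ * A).det) / 2 := by
  have hpt (x : Fin d → ℝ) : log (gaussianDensity A x / gaussianDensity B x) =
      (log B.det - log A.det) / 2 + x ⬝ᵥ ((1 / 2 : ℝ) • (B⁻¹ - A⁻¹)) *ᵥ x := by
    rw [log_gaussianDensity_div hA.det_pos hB.det_pos, smul_mulVec, sub_mulVec, dotProduct_smul,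
      dotProduct_sub, smul_eq_mul]
    ring
  simp_rw [hpt]
  rw [integral_const_add_dotProduct_mulVec_mul_gaussianDensity hA, smul_mul, Matrix.sub_mul,
    nonsing_inv_mul _ (isUnit_iff_ne_zero.mpr hA.det_pos.ne'), trace_smul, trace_sub, trace_one,
    Fintype.card_fin, det_mul, det_nonsing_inv, Ring.inverse_eq_inv',
    log_mul (inv_ne_zero hB.det_pos.ne') hA.det_pos.ne', log_inv, smul_eq_mul]
  ring

end GaussianDensity

lemma Fintype.sum_ite_eq_else {ρ R : Type*} [Fintype ρ] [DecidableEq ρ] [Ring R] (r : ρ)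
    (x y : R) : ∑ q, (if r = q then x else y) = x + (Fintype.card ρ - 1) * y := by
  rw [Finset.sum_ite, Finset.sum_const, Finset.sum_const, Finset.filter_eq, Finset.filter_ne,
    Finset.card_erase_of_mem (Finset.mem_univ r)]
  have : 1 ≤ Fintype.card ρ := Fintype.card_pos_iff.mpr ⟨r⟩
  simp [Finset.card_univ, Nat.cast_sub this]

lemma det_of_ite_eq {ι R : Type*} [Fintype ι] [DecidableEq ι] [Nonempty ι] [Field R] (a b : R) :
    (of fun i j : ι => if i = j then a else b).det =
      (a - b) ^ (Fintype.card ι - 1) * (a + (Fintype.card ι - 1) * b) := by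
  obtain ⟨n, hn⟩ : ∃ n, Fintype.card ι = n + 1 :=
    Nat.exists_eq_add_one_of_ne_zero Fintype.card_ne_zero
  rcases eq_or_ne a b with rfl | hab
  · rcases n with _ | n
    · have : Unique ι := (Fintype.card_eq_one_iff_nonempty_unique.mp hn).some
      simp [det_unique]
    · have : Nontrivial ι := Fintype.one_lt_card_iff_nontrivial.mp (by omega)
      obtain ⟨i, j, hij⟩ := exists_pair_ne ι
      rw [det_zero_of_row_eq hij (funext fun l => by simp), hn, sub_self, zero_pow (by omega),
        zero_mul]
  · have hab' : a - b ≠ 0 := sub_ne_zero.mpr hab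
    have hM : (of fun i j : ι => if i = j then a else b) = (a - b) •
        (1 + replicateCol Unit (fun _ => b / (a - b)) * replicateRow Unit (fun _ => (1 : R))) := by
      ext i j
      by_cases hij : i = j
      · simp [one_apply, mul_apply, hij]
        field_simp
        ring
      · simp [one_apply, mul_apply, hij]
        field_simp
    rw [hM, det_smul, det_one_add_replicateCol_mul_replicateRow]
    simp only [dotProduct, one_mul, Finset.sum_const, Finset.card_univ, nsmul_eq_mul, hn,
      Nat.add_sub_cancel, Nat.cast_add, Nat.cast_one, add_sub_cancel_right, pow_succ]
    field_simp
    ring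

section BlockSigma

variable (κ ρ : Type*) [DecidableEq κ] [DecidableEq ρ]

def blockSigmaMat (σ ε : ℝ) : Matrix (κ × ρ) (κ × ρ) ℝ :=
  of fun p q => if p = q then 1 else if p.1 = q.1 then σ else ε

def offBlockOnes : Matrix (κ × ρ) (κ × ρ) ℝ :=
  of fun p q => if p.1 = q.1 then 0 else 1

lemma blockSigmaMat_eq_add (σ ε : ℝ) :
    blockSigmaMat κ ρ σ ε = blockSigmaMat κ ρ σ 0 + ε • offBlockOnes κ ρ := by
  ext p q
  by_cases hpq : p = q <;> by_cases hb : p.1 = q.1 <;> simp [blockSigmaMat, offBlockOnes, hpq, hb]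

variable [Fintype κ] [Fintype ρ]

lemma blockSigmaMat_zero_mul_offBlockOnes (σ : ℝ) :
    blockSigmaMat κ ρ σ 0 * offBlockOnes κ ρ =
      (1 + (Fintype.card ρ - 1) * σ) • offBlockOnes κ ρ := by
  ext ⟨b, r⟩ ⟨b', r'⟩
  rw [mul_apply, Fintype.sum_prod_type, Finset.sum_eq_single b (fun x _ hx => Finset.sum_eq_zero
    fun q _ => by simp [blockSigmaMat, Ne.symm hx]) (by simp)]
  simp only [blockSigmaMat, offBlockOnes, of_apply, Prod.mk.injEq, true_and, ite_true,
    Matrix.smul_apply, smul_eq_mul]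
  by_cases hb : b = b' <;> simp [hb, Fintype.sum_ite_eq_else]

lemma inv_blockSigmaMat_zero_mul {σ : ℝ} (h : IsUnit (blockSigmaMat κ ρ σ 0).det) (ε : ℝ) :
    (blockSigmaMat κ ρ σ 0)⁻¹ * blockSigmaMat κ ρ σ ε =
      1 + (ε / (1 + (Fintype.card ρ - 1) * σ)) • offBlockOnes κ ρ := by
  set s := 1 + ((Fintype.card ρ : ℝ) - 1) * σ
  have hBK : blockSigmaMat κ ρ σ 0 * offBlockOnes κ ρ = s • offBlockOnes κ ρ :=
    blockSigmaMat_zero_mul_offBlockOnes κ ρ σ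
  have hK : (blockSigmaMat κ ρ σ 0)⁻¹ * offBlockOnes κ ρ = s⁻¹ • offBlockOnes κ ρ := by
    rcases eq_or_ne s 0 with hs | hs
    · -- then `K = 0`, so the junk value `s⁻¹ = 0` is harmless
      have hK0 : offBlockOnes κ ρ = 0 := by
        rw [← nonsing_inv_mul_cancel_left _ (offBlockOnes κ ρ) h, hBK, hs, zero_smul,
          Matrix.mul_zero]
      simp [hK0]
    · calc (blockSigmaMat κ ρ σ 0)⁻¹ * offBlockOnes κ ρ
          = (blockSigmaMat κ ρ σ 0)⁻¹ * (s⁻¹ • (blockSigmaMat κ ρ σ 0 * offBlockOnes κ ρ)) := by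
            rw [hBK, inv_smul_smul₀ hs]
        _ = s⁻¹ • offBlockOnes κ ρ := by
            rw [Matrix.mul_smul, nonsing_inv_mul_cancel_left _ _ h]
  rw [blockSigmaMat_eq_add κ ρ σ ε, Matrix.mul_add, nonsing_inv_mul _ h, Matrix.mul_smul, hK,
    smul_smul, div_eq_mul_inv]

lemma det_one_add_smul_offBlockOnes [Nonempty κ] (t : ℝ) :
    (1 + t • offBlockOnes κ ρ).det =
      (1 - Fintype.card ρ * t) ^ (Fintype.card κ - 1) *
        (1 + (Fintype.card κ - 1) * (Fintype.card ρ * t)) := by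
  set U : Matrix (κ × ρ) κ ℝ := of fun p b => if p.1 = b then 0 else t
  set V : Matrix κ (κ × ρ) ℝ := of fun b q => if b = q.1 then 1 else 0
  have hUV : t • offBlockOnes κ ρ = U * V := by
    ext p q
    simp [U, V, mul_apply, offBlockOnes]
  have hVU : 1 + V * U = of fun b b' => if b = b' then 1 else Fintype.card ρ * t := by
    ext b b'
    rw [Matrix.add_apply, mul_apply, Fintype.sum_prod_type]
    dsimp only [U, V, of_apply]
    rw [Finset.sum_eq_single b (fun c _ hc => by simp [Ne.symm hc]) (by simp)]
    by_cases hb : b = b' <;> simp [one_apply, hb]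
  rw [hUV, det_one_add_mul_comm, hVU, det_of_ite_eq]

lemma log_det_one_add_smul_offBlockOnes {t : ℝ} (h : 0 < (1 + t • offBlockOnes κ ρ).det) :
    log (1 + t • offBlockOnes κ ρ).det =
      log (1 + (Fintype.card κ - 1) * (Fintype.card ρ * t)) +
        (Fintype.card κ - 1) * log (1 - Fintype.card ρ * t) := by
  rcases isEmpty_or_nonempty κ with hκ | hκ
  · simp [det_isEmpty, Fintype.card_eq_zero]
    ring_nf
  · rw [det_one_add_smul_offBlockOnes] at h ⊢
    rw [log_mul (left_ne_zero_of_mul h.ne') (right_ne_zero_of_mul h.ne'), log_pow,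
      Nat.cast_sub Fintype.card_pos, Nat.cast_one]
    ring

end BlockSigma

lemma SigmaMat_mul_eq_reindex {k : ℕ} (hk : 0 < k) (m : ℕ) (σ ε : ℝ) :
    SigmaMat (m * k) k σ ε =
      reindex finProdFinEquiv finProdFinEquiv (blockSigmaMat (Fin m) (Fin k) σ ε) := by
  have hdiv (p : Fin m × Fin k) : (finProdFinEquiv p : ℕ) / k = p.1 := by
    rw [finProdFinEquiv_apply_val, Nat.add_mul_div_left _ _ hk, Nat.div_eq_of_lt p.2.isLt,
      zero_add]
  ext i j
  obtain ⟨p, rfl⟩ := finProdFinEquiv.surjective i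
  obtain ⟨q, rfl⟩ := finProdFinEquiv.surjective j
  simp only [SigmaMat, blockSigmaMat, reindex_apply, submatrix_apply, Equiv.symm_apply_apply,
    of_apply, hdiv, Fin.val_inj, EmbeddingLike.apply_eq_iff_eq]

/-- for `k ∣ d` and both covariances positive definite,
`KL(f_{Σ^{(d,k)}_{σ,ε}} ‖ f_{Σ^{(d,k)}_σ}) =
  -(1/2) log(1 + (d-k)ε/(1+(k-1)σ)) - (1/2)(d/k - 1) log(1 - kε/(1+(k-1)σ))`. -/
theorem stmt14 (d k : ℕ) (hk : 0 < k) (hkd : k ∣ d) (σ ε : ℝ)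
    (hpd : (SigmaMat d k σ ε).PosDef) (hpd0 : (SigmaMat d k σ 0).PosDef) :
    ∫ x : Fin d → ℝ,
        Real.log (gaussianDensity (SigmaMat d k σ ε) x /
            gaussianDensity (SigmaMat d k σ 0) x) *
          gaussianDensity (SigmaMat d k σ ε) x
      = -(1 / 2) * Real.log (1 + ((d : ℝ) - k) * ε / (1 + ((k : ℝ) - 1) * σ))
        - (1 / 2) * (((d / k : ℕ) : ℝ) - 1) *
            Real.log (1 - (k : ℝ) * ε / (1 + ((k : ℝ) - 1) * σ)) := by
  obtain ⟨m, rfl⟩ : ∃ m, d = m * k := ⟨d / k, (Nat.div_mul_cancel hkd).symm⟩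
  set e : Fin m × Fin k ≃ Fin (m * k) := finProdFinEquiv
  have hunit : IsUnit (blockSigmaMat (Fin m) (Fin k) σ 0).det := by
    rw [← det_reindex_self e, ← SigmaMat_mul_eq_reindex hk]
    exact hpd0.det_pos.ne'.isUnit
  have hBA : (SigmaMat (m * k) k σ 0)⁻¹ * SigmaMat (m * k) k σ ε =
      reindex e e (1 + (ε / (1 + ((k : ℝ) - 1) * σ)) • offBlockOnes (Fin m) (Fin k)) := by
    rw [SigmaMat_mul_eq_reindex hk, SigmaMat_mul_eq_reindex hk, inv_reindex, reindex_apply,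
      reindex_apply, submatrix_mul_equiv, inv_blockSigmaMat_zero_mul _ _ hunit, Fintype.card_fin,
      reindex_apply]
  have hpos : 0 < ((SigmaMat (m * k) k σ 0)⁻¹ * SigmaMat (m * k) k σ ε).det := by
    rw [det_mul, det_nonsing_inv, Ring.inverse_eq_inv']
    exact mul_pos (inv_pos.mpr hpd0.det_pos) hpd.det_pos
  have htrace : ((SigmaMat (m * k) k σ 0)⁻¹ * SigmaMat (m * k) k σ ε).trace = (m * k : ℕ) := by
    rw [hBA]
    simp [trace, offBlockOnes]
  rw [hBA, det_reindex_self] at hpos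
  rw [integral_log_gaussianDensity_div_mul hpd hpd0, htrace, hBA, det_reindex_self,
    log_det_one_add_smul_offBlockOnes _ _ hpos, Nat.mul_div_cancel _ hk]
  simp only [Fintype.card_fin]
  push_cast
  ring_nf
end

section
/- Define g(a,b) = log((1+(a−1)σ)/(1−σ)) + log((1+(b−1)σ)/(1−σ)) − log((1+(a+b−1)σ)/(1−σ)) for σ ∈ (0,1) and a,b ≥ 1. Then g(a,b) > 0 for all a,b ≥ 1. (Indeed, g is nondecreasing in each argument and g(1,1) = −log((1−σ)(1+σ)) > 0.) -/
open Real

/-- for `σ ∈ (0,1)` and `a, b ≥ 1`,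
`g(a,b) = log((1+(a-1)σ)/(1-σ)) + log((1+(b-1)σ)/(1-σ)) - log((1+(a+b-1)σ)/(1-σ)) > 0`. -/
theorem stmt16 (σ : ℝ) (hσ : σ ∈ Set.Ioo (0 : ℝ) 1) (a b : ℝ) (ha : 1 ≤ a) (hb : 1 ≤ b) :
    0 < Real.log ((1 + (a - 1) * σ) / (1 - σ)) + Real.log ((1 + (b - 1) * σ) / (1 - σ))
        - Real.log ((1 + (a + b - 1) * σ) / (1 - σ)) := by
  obtain ⟨h0, h1⟩ := hσ
  have hs : (0:ℝ) < 1 - σ := by linarith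
  have hA : (0:ℝ) < 1 + (a - 1) * σ := by nlinarith
  have hB : (0:ℝ) < 1 + (b - 1) * σ := by nlinarith
  have hC : (0:ℝ) < 1 + (a + b - 1) * σ := by nlinarith
  rw [Real.log_div hA.ne' hs.ne', Real.log_div hB.ne' hs.ne', Real.log_div hC.ne' hs.ne']
  have key : Real.log (1 + (a + b - 1) * σ) + Real.log (1 - σ)
      < Real.log (1 + (a - 1) * σ) + Real.log (1 + (b - 1) * σ) := by
    rw [← Real.log_mul hC.ne' hs.ne', ← Real.log_mul hA.ne' hB.ne']
    apply Real.log_lt_log (by positivity)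
    nlinarith [mul_pos h0 h0, mul_le_mul ha hb (by norm_num : (0:ℝ) ≤ 1) (le_trans zero_le_one ha)]
  linarith
end

section
/- Suppose Σ = A^d_σ (1 on the diagonal, σ ∈ (0,1) elsewhere). For a structure s = (s_1,…,s_M) of positive integers summing to d, with 𝒫_s the partition into consecutive blocks of sizes s_i, one has KL(f_Σ ‖ f_{Σ_{𝒫_s}}) = (1/2)(∑_{i=1}^M log((1+(s_i−1)σ)/(1−σ)) − log((1+(d−1)σ)/(1−σ))). Moreover, among all structures with all s_i ≤ k (where k < d, d = pk + r, 0 ≤ r < k), this KL is minimized by the structure s* = (k,…,k,r) with p blocks of size k and one block of size r. -/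
open Real MeasureTheory Matrix
open scoped Classical

/-- The `d × d` matrix with `1` on the diagonal and `σ` elsewhere. -/
noncomputable def Amat (d : ℕ) (σ : ℝ) : Matrix (Fin d) (Fin d) ℝ :=
  fun i j => if i = j then 1 else σ

/-- Offset of the `m`-th consecutive block of the structure `s`. -/
def offset {M : ℕ} (s : Fin M → ℕ) (m : Fin M) : ℕ :=
  ∑ t : Fin M, if t < m then s t else 0

/-- `i` and `j` lie in the same consecutive block of the structure `s`. -/
def SameBlock {M : ℕ} (s : Fin M → ℕ) (d : ℕ) (i j : Fin d) : Prop :=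
  ∃ m : Fin M, (offset s m ≤ (i : ℕ) ∧ (i : ℕ) < offset s m + s m) ∧
    (offset s m ≤ (j : ℕ) ∧ (j : ℕ) < offset s m + s m)

/-- `Σ_{P_s}`: keep the entries of `S0` within the consecutive blocks of the
structure `s`, zero the rest. -/
noncomputable def structMatrix {d M : ℕ} (s : Fin M → ℕ)
    (S0 : Matrix (Fin d) (Fin d) ℝ) : Matrix (Fin d) (Fin d) ℝ :=
  fun i j => if SameBlock s d i j then S0 i j else 0

/-- KL divergence between the centered Gaussians with covariances `S0` and `S1`. -/
noncomputable def klGauss {d : ℕ} (S0 S1 : Matrix (Fin d) (Fin d) ℝ) : ℝ :=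
  ∫ x : Fin d → ℝ,
    Real.log (gaussianDensity S0 x / gaussianDensity S1 x) * gaussianDensity S0 x

/-!
Write `S₀ = C Cᵀ`, so that `f_{S₀}` is the law of `C Z` with `Z` standard normal. The
coordinates of `Z` are independent standard normals, so `E[Zᵢ Zⱼ] = δᵢⱼ`, and the change of
variables `x = C y` turns `log (f_{S₀} / f_{S₁})` into a quadratic polynomial in `Z`. This gives
`KL(f_{S₀} ‖ f_{S₁}) = ½ (tr (S₁⁻¹ S₀) - n + log det S₁ - log det S₀)`.

For `S₀ = Σ` and `S₁ = Σ_𝒫`, the matrix `Σ_𝒫` is block diagonal, hence so is its inverse, and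
`Σ` agrees with `Σ_𝒫` on the diagonal blocks; therefore `tr (Σ_𝒫⁻¹ Σ) = tr (Σ_𝒫⁻¹ Σ_𝒫) = d`,
while `det Σ_𝒫 = ∏ det A^{sᵢ}_σ`. The powers of `1 - σ` cancel and the KL divergence is
`½ (∑ g sᵢ - g d)` with `g n = log (1 + n σ / (1 - σ))`.

The function `g` is concave with `g 0 = 0`, so `g c + g (a + b - c) ≤ g a + g b` for
`c ≤ min a b`. Merging the first block with the rest by induction on the number of blocks, this
exchange inequality shows `∑ g sᵢ ≥ p g k + g r` whenever every `sᵢ ≤ k` and `∑ sᵢ = p k + r`.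
-/

open ProbabilityTheory

lemma integrable_gaussianPDFReal_mul_iff {f : ℝ → ℝ} :
    Integrable (fun t => gaussianPDFReal 0 1 t * f t) ↔ Integrable f (gaussianReal 0 1) := by
  rw [gaussianReal_of_var_ne_zero 0 one_ne_zero,
    integrable_withDensity_iff_integrable_smul' (measurable_gaussianPDF 0 1)
      (ae_of_all _ fun _ => gaussianPDF_lt_top)]
  simp only [toReal_gaussianPDF, smul_eq_mul]

lemma integral_gaussianPDFReal_mul (f : ℝ → ℝ) :
    ∫ t, gaussianPDFReal 0 1 t * f t = ∫ t, f t ∂gaussianReal 0 1 :=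
  (integral_gaussianReal_eq_integral_smul one_ne_zero).symm

lemma integrable_pow_gaussianReal (e : ℕ) :
    Integrable (fun t : ℝ => t ^ e) (gaussianReal 0 1) := by
  rcases eq_or_ne e 0 with rfl | he
  · simp
  · refine (integrable_norm_iff (by fun_prop)).1 ?_
    simpa only [norm_pow, id] using (memLp_id_gaussianReal e).integrable_norm_pow he

lemma integral_sq_gaussianReal : ∫ t, t ^ 2 ∂gaussianReal 0 1 = 1 := by
  have h := variance_of_integral_eq_zero measurable_id.aemeasurable
    (integral_id_gaussianReal (μ := 0) (v := 1))
  rw [variance_id_gaussianReal] at h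
  simpa using h.symm

section StandardGaussian

variable {n : ℕ}

lemma gaussianDensity_one (y : Fin n → ℝ) :
    gaussianDensity 1 y = ∏ i, gaussianPDFReal 0 1 (y i) := by
  have h2π : (0 : ℝ) ≤ 2 * π := by positivity
  simp only [gaussianDensity, gaussianPDFReal, det_one, one_rpow, mul_one, inv_one, one_mulVec,
    NNReal.coe_one, sub_zero, Finset.prod_mul_distrib, Finset.prod_const, Finset.card_univ,
    Fintype.card_fin, ← Real.exp_sum]
  congr 1
  · rw [Real.sqrt_eq_rpow, ← Real.rpow_neg_one, ← Real.rpow_mul h2π, ← Real.rpow_natCast,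
      ← Real.rpow_mul h2π]
    ring_nf
  · simp only [dotProduct, neg_div, Finset.sum_neg_distrib, Finset.sum_div, sq]

lemma monomial_mul_gaussianDensity_one (e : Fin n → ℕ) (y : Fin n → ℝ) :
    (∏ l, y l ^ e l) * gaussianDensity 1 y = ∏ l, gaussianPDFReal 0 1 (y l) * y l ^ e l := by
  rw [gaussianDensity_one, ← Finset.prod_mul_distrib]
  simp_rw [mul_comm]

lemma integrable_monomial_mul_gaussianDensity_one (e : Fin n → ℕ) :
    Integrable (fun y : Fin n → ℝ => (∏ l, y l ^ e l) * gaussianDensity 1 y) := by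
  simp_rw [monomial_mul_gaussianDensity_one]
  exact Integrable.fintype_prod fun l =>
    integrable_gaussianPDFReal_mul_iff.2 (integrable_pow_gaussianReal (e l))

lemma integral_monomial_mul_gaussianDensity_one (e : Fin n → ℕ) :
    ∫ y : Fin n → ℝ, (∏ l, y l ^ e l) * gaussianDensity 1 y
      = ∏ l, ∫ t, t ^ e l ∂gaussianReal 0 1 := by
  simp_rw [monomial_mul_gaussianDensity_one,
    integral_fintype_prod_volume_eq_prod (fun l t => gaussianPDFReal 0 1 t * t ^ e l),
    integral_gaussianPDFReal_mul]

lemma integrable_gaussianDensity_one :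
    Integrable (gaussianDensity (1 : Matrix (Fin n) (Fin n) ℝ)) := by
  simpa using integrable_monomial_mul_gaussianDensity_one (n := n) 0

lemma integral_gaussianDensity_one : ∫ y : Fin n → ℝ, gaussianDensity 1 y = 1 := by
  simpa using integral_monomial_mul_gaussianDensity_one (n := n) 0

lemma prod_pow_ite_add_ite (y : Fin n → ℝ) (i j : Fin n) :
    ∏ l, y l ^ ((if l = i then 1 else 0) + (if l = j then 1 else 0)) = y i * y j := by
  simp only [pow_add, Finset.prod_mul_distrib, pow_ite, pow_one, pow_zero, Finset.prod_ite_eq',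
    Finset.mem_univ, if_true]

lemma integrable_mul_mul_gaussianDensity_one (i j : Fin n) :
    Integrable (fun y : Fin n → ℝ => y i * y j * gaussianDensity 1 y) := by
  simpa only [prod_pow_ite_add_ite] using integrable_monomial_mul_gaussianDensity_one
    fun l => (if l = i then 1 else 0) + (if l = j then 1 else 0)

lemma integral_mul_mul_gaussianDensity_one (i j : Fin n) :
    ∫ y : Fin n → ℝ, y i * y j * gaussianDensity 1 y = if i = j then 1 else 0 := by
  simp_rw [← prod_pow_ite_add_ite _ i j, integral_monomial_mul_gaussianDensity_one]
  split_ifs with hij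
  · subst hij
    rw [Finset.prod_eq_single_of_mem i (Finset.mem_univ i) fun l _ hl => by simp [hl]]
    simp [integral_sq_gaussianReal]
  · exact Finset.prod_eq_zero (Finset.mem_univ i) (by simp [hij, integral_id_gaussianReal])

lemma dotProduct_mulVec_eq_sum (N : Matrix (Fin n) (Fin n) ℝ) (y : Fin n → ℝ) :
    y ⬝ᵥ N *ᵥ y = ∑ i, ∑ j, N i j * (y i * y j) := by
  simp only [dotProduct, mulVec, Finset.mul_sum]
  exact Finset.sum_congr rfl fun i _ => Finset.sum_congr rfl fun j _ => by ring

lemma integral_add_quadForm_mul_gaussianDensity_one (a : ℝ) (N : Matrix (Fin n) (Fin n) ℝ) :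
    ∫ y : Fin n → ℝ, (a + y ⬝ᵥ N *ᵥ y) * gaussianDensity 1 y = a + N.trace := by
  have hint : ∀ i j,
      Integrable (fun y : Fin n → ℝ => N i j * (y i * y j * gaussianDensity 1 y)) :=
    fun i j => (integrable_mul_mul_gaussianDensity_one i j).const_mul _
  have hpt : ∀ y : Fin n → ℝ, (a + y ⬝ᵥ N *ᵥ y) * gaussianDensity 1 y
      = a * gaussianDensity 1 y + ∑ i, ∑ j, N i j * (y i * y j * gaussianDensity 1 y) := by
    intro y
    simp only [dotProduct_mulVec_eq_sum, add_mul, Finset.sum_mul, mul_assoc]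
  simp_rw [hpt]
  rw [integral_add (integrable_gaussianDensity_one.const_mul a) (integrable_finsetSum _ fun i _ =>
      integrable_finsetSum _ fun j _ => hint i j), integral_const_mul, integral_gaussianDensity_one,
    integral_finsetSum _ fun i _ => integrable_finsetSum _ fun j _ => hint i j]
  simp_rw [integral_finsetSum _ fun j _ => hint _ j, integral_const_mul,
    integral_mul_mul_gaussianDensity_one]
  simp [Matrix.trace]

end StandardGaussian

lemma integral_comp_mulVec {ι : Type*} [Fintype ι] [DecidableEq ι] {C : Matrix ι ι ℝ}
    (hC : C.det ≠ 0) (f : (ι → ℝ) → ℝ) :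
    ∫ x, f x = |C.det| * ∫ y, f (C *ᵥ y) := by
  have := C.invertibleOfIsUnitDet hC.isUnit
  have hemb : MeasurableEmbedding (Matrix.toLin' C) :=
    (C.toLinearEquiv' this).toContinuousLinearEquiv.toHomeomorph.measurableEmbedding
  simp_rw [← Matrix.toLin'_apply]
  rw [← hemb.integral_map, Real.map_matrix_volume_pi_eq_smul_volume_pi hC,
    integral_smul_measure, ENNReal.toReal_ofReal (abs_nonneg _), abs_inv, smul_eq_mul,
    mul_inv_cancel_left₀ (abs_ne_zero.2 hC)]

section GaussianKL

variable {n : ℕ}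

lemma mulVec_dotProduct_mulVec (C N : Matrix (Fin n) (Fin n) ℝ) (y : Fin n → ℝ) :
    C *ᵥ y ⬝ᵥ N *ᵥ (C *ᵥ y) = y ⬝ᵥ (Cᵀ * N * C) *ᵥ y := by
  rw [mulVec_mulVec, ← vecMul_transpose C y, dotProduct_mulVec, dotProduct_mulVec, vecMul_vecMul,
    Matrix.mul_assoc]

lemma transpose_mul_inv_mul_self {S C : Matrix (Fin n) (Fin n) ℝ} (hS : S = C * Cᵀ)
    (hC : C.det ≠ 0) : Cᵀ * S⁻¹ * C = 1 := by
  have hCT : IsUnit Cᵀ.det := by rw [det_transpose]; exact hC.isUnit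
  rw [hS, Matrix.mul_inv_rev, ← Matrix.mul_assoc, mul_nonsing_inv _ hCT, Matrix.one_mul,
    nonsing_inv_mul _ hC.isUnit]

lemma abs_det_mul_gaussianDensity_mulVec {S C : Matrix (Fin n) (Fin n) ℝ} (hS : S = C * Cᵀ)
    (hC : C.det ≠ 0) (y : Fin n → ℝ) :
    |C.det| * gaussianDensity S (C *ᵥ y) = gaussianDensity 1 y := by
  have hdet : S.det = C.det ^ 2 := by rw [hS, det_mul, det_transpose, sq]
  have hroot : S.det ^ (-(1 : ℝ) / 2) = |C.det|⁻¹ := by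
    rw [hdet, neg_div, Real.rpow_neg (sq_nonneg _), ← Real.sqrt_eq_rpow, Real.sqrt_sq_eq_abs]
  simp only [gaussianDensity, hroot, mulVec_dotProduct_mulVec, transpose_mul_inv_mul_self hS hC,
    det_one, Real.one_rpow, inv_one, one_mulVec, mul_one]
  field_simp [abs_ne_zero.2 hC]

lemma integral_mul_gaussianDensity_eq {S C : Matrix (Fin n) (Fin n) ℝ} (hS : S = C * Cᵀ)
    (hC : C.det ≠ 0) (g : (Fin n → ℝ) → ℝ) :
    ∫ x, g x * gaussianDensity S x = ∫ y, g (C *ᵥ y) * gaussianDensity 1 y := by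
  rw [integral_comp_mulVec hC, ← integral_const_mul]
  simp_rw [← abs_det_mul_gaussianDensity_mulVec hS hC]
  ring_nf

open scoped MatrixOrder in
lemma Matrix.PosDef.exists_eq_mul_transpose {S : Matrix (Fin n) (Fin n) ℝ} (hS : S.PosDef) :
    ∃ C : Matrix (Fin n) (Fin n) ℝ, S = C * Cᵀ ∧ C.det ≠ 0 := by
  obtain ⟨C, hC⟩ := CStarAlgebra.nonneg_iff_eq_mul_star_self.mp hS.posSemidef.nonneg
  refine ⟨C, hC, fun h => hS.det_pos.ne' ?_⟩
  rw [hC, star_eq_conjTranspose, conjTranspose_eq_transpose_of_trivial, det_mul, h, zero_mul]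

lemma integral_add_quadForm_mul_gaussianDensity {S : Matrix (Fin n) (Fin n) ℝ} (hS : S.PosDef)
    (a : ℝ) (D : Matrix (Fin n) (Fin n) ℝ) :
    ∫ x, (a + x ⬝ᵥ D *ᵥ x) * gaussianDensity S x = a + (D * S).trace := by
  obtain ⟨C, hSC, hC⟩ := hS.exists_eq_mul_transpose
  rw [integral_mul_gaussianDensity_eq hSC hC]
  simp_rw [mulVec_dotProduct_mulVec]
  rw [integral_add_quadForm_mul_gaussianDensity_one, hSC, trace_mul_comm D, trace_mul_cycle]

lemma gaussianDensity_pos_s18 {S : Matrix (Fin n) (Fin n) ℝ} (hS : 0 < S.det) (x : Fin n → ℝ) :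
    0 < gaussianDensity S x := by
  unfold gaussianDensity
  have := Real.rpow_pos_of_pos hS (-(1 : ℝ) / 2)
  positivity

lemma log_gaussianDensity {S : Matrix (Fin n) (Fin n) ℝ} (hS : 0 < S.det) (x : Fin n → ℝ) :
    Real.log (gaussianDensity S x)
      = -(n : ℝ) / 2 * Real.log (2 * π) - Real.log S.det / 2 - x ⬝ᵥ S⁻¹ *ᵥ x / 2 := by
  have h2π : (0 : ℝ) < (2 * π) ^ (-(n : ℝ) / 2) := by positivity
  rw [gaussianDensity, Real.log_mul (by positivity) (Real.exp_pos _).ne',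
    Real.log_mul h2π.ne' (Real.rpow_pos_of_pos hS _).ne', Real.log_exp,
    Real.log_rpow (by positivity), Real.log_rpow hS]
  ring

lemma log_gaussianDensity_div_s18 {S₀ S₁ : Matrix (Fin n) (Fin n) ℝ} (h₀ : 0 < S₀.det)
    (h₁ : 0 < S₁.det) (x : Fin n → ℝ) :
    Real.log (gaussianDensity S₀ x / gaussianDensity S₁ x)
      = (Real.log S₁.det - Real.log S₀.det + x ⬝ᵥ (S₁⁻¹ - S₀⁻¹) *ᵥ x) / 2 := by
  rw [Real.log_div (gaussianDensity_pos_s18 h₀ x).ne' (gaussianDensity_pos_s18 h₁ x).ne',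
    log_gaussianDensity h₀, log_gaussianDensity h₁, sub_mulVec, dotProduct_sub]
  ring

theorem klGauss_eq {S₀ S₁ : Matrix (Fin n) (Fin n) ℝ} (h₀ : S₀.PosDef)
    (h₁ : 0 < S₁.det) :
    klGauss S₀ S₁ = ((S₁⁻¹ * S₀).trace - n + Real.log S₁.det - Real.log S₀.det) / 2 := by
  simp_rw [klGauss, log_gaussianDensity_div_s18 h₀.det_pos h₁, div_mul_eq_mul_div, integral_div,
    integral_add_quadForm_mul_gaussianDensity h₀, Matrix.sub_mul,
    nonsing_inv_mul _ h₀.det_pos.ne'.isUnit, trace_sub, trace_one, Fintype.card_fin]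
  ring

end GaussianKL

section Blocks

variable {M : ℕ} (s : Fin M → ℕ)

lemma offset_eq_sum_castLE (m : Fin M) :
    offset s m = ∑ i : Fin m, s (Fin.castLE m.2.le i) := by
  rw [offset, ← Finset.sum_filter]
  refine (Finset.sum_bij (fun i _ => Fin.castLE m.2.le i)
    (fun i _ => Finset.mem_filter.2 ⟨Finset.mem_univ _, i.2⟩)
    (fun _ _ _ _ h => Fin.castLE_injective _ h) (fun t ht => ?_) (fun _ _ => rfl)).symm
  simp only [Finset.mem_filter, Finset.mem_univ, true_and] at ht
  exact ⟨⟨t, ht⟩, Finset.mem_univ _, rfl⟩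

def blockIndex (v : Fin (∑ i, s i)) : Fin M := (finSigmaFinEquiv.symm v).1

lemma blockIndex_eq_iff (v : Fin (∑ i, s i)) (m : Fin M) :
    blockIndex s v = m ↔ offset s m ≤ v ∧ (v : ℕ) < offset s m + s m := by
  constructor
  · rintro rfl
    have h := congrArg Fin.val (finSigmaFinEquiv.apply_symm_apply v)
    have hlt := (finSigmaFinEquiv.symm v).2.2
    rw [finSigmaFinEquiv_apply, ← offset_eq_sum_castLE] at h
    rw [blockIndex]
    omega
  · rintro ⟨h₁, h₂⟩
    have hv : finSigmaFinEquiv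
        (⟨m, ⟨v - offset s m, by omega⟩⟩ : (i : Fin M) × Fin (s i)) = v := by
      ext
      rw [finSigmaFinEquiv_apply, ← offset_eq_sum_castLE]
      simp only
      omega
    rw [blockIndex, ← hv, Equiv.symm_apply_apply]

lemma sameBlock_iff (u v : Fin (∑ i, s i)) :
    SameBlock s _ u v ↔ blockIndex s u = blockIndex s v := by
  simp_rw [SameBlock, ← blockIndex_eq_iff]
  exact ⟨fun ⟨m, hu, hv⟩ => hu.trans hv.symm, fun h => ⟨_, rfl, h.symm⟩⟩

lemma card_blockIndex_fiber (m : Fin M) :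
    Fintype.card {v // blockIndex s v = m} = s m :=
  (Fintype.card_congr ((finSigmaFinEquiv.symm.subtypeEquiv fun _ => Iff.rfl).trans
    (Equiv.sigmaSubtype m))).trans (Fintype.card_fin _)

end Blocks

section BlockDiagonal

variable {ι α K : Type*} [LinearOrder α] [Field K] {b : ι → α} {T : Matrix ι ι K}

lemma blockTriangular_of_apply_eq_zero (hT : ∀ i j, b i ≠ b j → T i j = 0) :
    T.BlockTriangular b :=
  fun i j h => hT i j h.ne'

lemma blockTriangular_toDual_of_apply_eq_zero (hT : ∀ i j, b i ≠ b j → T i j = 0) :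
    T.BlockTriangular (OrderDual.toDual ∘ b) :=
  fun i j h => hT i j (OrderDual.toDual_lt_toDual.1 h).ne

variable [Fintype ι] [DecidableEq ι]

lemma inv_apply_eq_zero_of_ne (hT : ∀ i j, b i ≠ b j → T i j = 0) (hdet : IsUnit T.det)
    {i j : ι} (h : b i ≠ b j) : T⁻¹ i j = 0 := by
  have := T.invertibleOfIsUnitDet hdet
  rcases h.lt_or_gt with h | h
  · exact blockTriangular_inv_of_blockTriangular (blockTriangular_toDual_of_apply_eq_zero hT)
      (b := OrderDual.toDual ∘ b) (OrderDual.toDual_lt_toDual.2 h)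
  · exact blockTriangular_inv_of_blockTriangular (blockTriangular_of_apply_eq_zero hT) h

lemma trace_inv_mul_eq_card (hT : ∀ i j, b i ≠ b j → T i j = 0) (hdet : IsUnit T.det)
    {S : Matrix ι ι K} (hS : ∀ i j, b i = b j → S i j = T i j) :
    (T⁻¹ * S).trace = Fintype.card ι := by
  have hsupp : ∀ i l, T⁻¹ i l * S l i = T⁻¹ i l * T l i := by
    intro i l
    by_cases h : b i = b l
    · rw [hS l i h.symm]
    · rw [inv_apply_eq_zero_of_ne hT hdet h, zero_mul, zero_mul]
  calc (T⁻¹ * S).trace = (T⁻¹ * T).trace := by simp only [trace, diag, mul_apply, hsupp]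
    _ = Fintype.card ι := by rw [nonsing_inv_mul _ hdet, trace_one]

end BlockDiagonal

def equicorrelation (ι : Type*) [DecidableEq ι] (σ : ℝ) : Matrix ι ι ℝ :=
  of fun i j => if i = j then 1 else σ

section Equicorrelation

variable {ι : Type*} [Fintype ι] [DecidableEq ι] {σ : ℝ}

lemma det_equicorrelation (hσ : σ ≠ 1) :
    (equicorrelation ι σ).det
      = (1 - σ) ^ Fintype.card ι * ((1 + (Fintype.card ι - 1) * σ) / (1 - σ)) := by
  have h1σ : 1 - σ ≠ 0 := sub_ne_zero.2 hσ.symm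
  have hM : equicorrelation ι σ = (1 - σ) • (1 + replicateCol Unit (fun _ : ι => σ / (1 - σ))
      * replicateRow Unit (fun _ : ι => (1 : ℝ))) := by
    ext i j
    by_cases h : i = j
    · subst h; simp [equicorrelation, mul_apply]; field_simp; ring
    · simp [equicorrelation, h, mul_apply]; field_simp
  rw [hM, det_smul, det_one_add_replicateCol_mul_replicateRow]
  simp only [dotProduct, one_mul, Finset.sum_const, Finset.card_univ, nsmul_eq_mul]
  field_simp
  ring

lemma posDef_equicorrelation (h₀ : 0 ≤ σ) (h₁ : σ < 1) :
    (equicorrelation ι σ).PosDef := by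
  have hM : equicorrelation ι σ
      = (1 - σ) • (1 : Matrix ι ι ℝ) + σ • vecMulVec 1 (star 1) := by
    ext i j
    by_cases h : i = j <;> simp [equicorrelation, h, vecMulVec]
  rw [hM]
  exact (PosDef.one.smul (sub_pos.2 h₁)).add_posSemidef
    ((posSemidef_vecMulVec_self_star 1).smul h₀)

end Equicorrelation

section StructMatrix

variable {M : ℕ} (s : Fin M → ℕ)

lemma structMatrix_apply_of_ne (S : Matrix (Fin (∑ i, s i)) (Fin (∑ i, s i)) ℝ)
    {u v : Fin (∑ i, s i)} (h : blockIndex s u ≠ blockIndex s v) :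
    structMatrix s S u v = 0 := by
  rw [structMatrix, if_neg (by rwa [sameBlock_iff])]

lemma structMatrix_apply_of_eq (S : Matrix (Fin (∑ i, s i)) (Fin (∑ i, s i)) ℝ)
    {u v : Fin (∑ i, s i)} (h : blockIndex s u = blockIndex s v) :
    structMatrix s S u v = S u v := by
  rw [structMatrix, if_pos (by rwa [sameBlock_iff])]

lemma det_structMatrix_equicorrelation {σ : ℝ} (hσ : σ ≠ 1) :
    (structMatrix s (equicorrelation (Fin (∑ i, s i)) σ)).det
      = ∏ m, (1 - σ) ^ s m * ((1 + (s m - 1) * σ) / (1 - σ)) := by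
  rw [(blockTriangular_of_apply_eq_zero fun _ _ => structMatrix_apply_of_ne s _).det_fintype]
  refine Finset.prod_congr rfl fun m _ => ?_
  have hblock : (structMatrix s (equicorrelation _ σ)).toSquareBlock (blockIndex s) m
      = equicorrelation {v // blockIndex s v = m} σ := by
    ext u v
    rw [toSquareBlock_def, of_apply, structMatrix_apply_of_eq s _ (u.2.trans v.2.symm)]
    simp only [equicorrelation, of_apply, Subtype.ext_iff]
  rw [hblock, det_equicorrelation hσ, card_blockIndex_fiber]

end StructMatrix

lemma amat_eq_equicorrelation (d : ℕ) (σ : ℝ) : Amat d σ = equicorrelation (Fin d) σ := rfl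

/-- `log (det A^n_σ / (1 - σ) ^ n)`, which equals `log (1 + n σ / (1 - σ))`. -/
noncomputable def equicorrelationLogFactor (σ : ℝ) (n : ℕ) : ℝ :=
  Real.log ((1 + ((n : ℝ) - 1) * σ) / (1 - σ))

section LogFactor

variable {σ : ℝ}

lemma one_add_mul_div_one_sub_pos (h₀ : 0 ≤ σ) (h₁ : σ < 1) (n : ℕ) :
    0 < (1 + ((n : ℝ) - 1) * σ) / (1 - σ) := by
  have : (0 : ℝ) ≤ n * σ := by positivity
  exact div_pos (by nlinarith) (by linarith)

lemma equicorrelationLogFactor_zero (hσ : σ ≠ 1) : equicorrelationLogFactor σ 0 = 0 := by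
  rw [equicorrelationLogFactor, Nat.cast_zero, zero_sub, neg_one_mul, ← sub_eq_add_neg,
    div_self (sub_ne_zero.2 hσ.symm), Real.log_one]

lemma equicorrelationLogFactor_exchange (h₀ : 0 ≤ σ) (h₁ : σ < 1) {a b c : ℕ}
    (hca : c ≤ a) (hcb : c ≤ b) :
    equicorrelationLogFactor σ c + equicorrelationLogFactor σ (a + b - c)
      ≤ equicorrelationLogFactor σ a + equicorrelationLogFactor σ b := by
  set τ := σ / (1 - σ) with hτ_def
  have hτ : 0 ≤ τ := div_nonneg h₀ (by linarith)
  have hfactor : ∀ n : ℕ, (1 + ((n : ℝ) - 1) * σ) / (1 - σ) = 1 + n * τ := by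
    intro n
    rw [hτ_def]
    field_simp [(by linarith : (1 : ℝ) - σ ≠ 0)]
    ring
  have hpos : ∀ n : ℕ, 0 < 1 + n * τ := fun n => by positivity
  simp only [equicorrelationLogFactor, hfactor]
  rw [← Real.log_mul (hpos _).ne' (hpos _).ne', ← Real.log_mul (hpos _).ne' (hpos _).ne']
  refine Real.log_le_log (mul_pos (hpos _) (hpos _)) ?_
  have hac : (c : ℝ) ≤ a := by exact_mod_cast hca
  have hbc : (c : ℝ) ≤ b := by exact_mod_cast hcb
  push_cast [Nat.cast_sub (hca.trans (Nat.le_add_right a b))]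
  nlinarith [mul_nonneg (mul_nonneg hτ hτ) (mul_nonneg (sub_nonneg.2 hac) (sub_nonneg.2 hbc))]

end LogFactor

theorem klGauss_amat_structMatrix {M : ℕ} (s : Fin M → ℕ) {σ : ℝ} (h₀ : 0 ≤ σ)
    (h₁ : σ < 1) :
    klGauss (Amat (∑ i, s i) σ) (structMatrix s (Amat (∑ i, s i) σ))
      = 1 / 2 * (∑ m, equicorrelationLogFactor σ (s m)
          - equicorrelationLogFactor σ (∑ i, s i)) := by
  have h1σ : 0 < 1 - σ := by linarith
  have hfac := one_add_mul_div_one_sub_pos h₀ h₁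
  have hdet := det_structMatrix_equicorrelation s h₁.ne
  have hdet_pos : 0 < (structMatrix s (equicorrelation (Fin (∑ i, s i)) σ)).det := by
    rw [hdet]
    exact Finset.prod_pos fun m _ => mul_pos (pow_pos h1σ _) (hfac _)
  rw [amat_eq_equicorrelation, klGauss_eq (posDef_equicorrelation h₀ h₁) hdet_pos,
    trace_inv_mul_eq_card (fun _ _ => structMatrix_apply_of_ne s _) hdet_pos.ne'.isUnit
      (fun _ _ h => (structMatrix_apply_of_eq s _ h).symm),
    hdet, det_equicorrelation h₁.ne, Fintype.card_fin,
    Real.log_prod fun m _ => (mul_pos (pow_pos h1σ _) (hfac _)).ne']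
  simp_rw [Real.log_mul (pow_ne_zero _ h1σ.ne') (hfac _).ne', Real.log_pow,
    Finset.sum_add_distrib, ← Finset.sum_mul, equicorrelationLogFactor]
  push_cast
  ring

lemma Nat.eq_and_eq_of_mul_add_eq {p p' k r r' : ℕ} (hr : r < k) (hr' : r' < k)
    (h : p * k + r = p' * k + r') : p = p' ∧ r = r' := by
  have hk : 0 < k := by omega
  obtain ⟨h₁, h₂⟩ := (Nat.div_mod_unique hk).2 ⟨(by ring : r + k * p = p * k + r), hr⟩
  obtain ⟨h₃, h₄⟩ :=
    (Nat.div_mod_unique hk).2 ⟨(by rw [h]; ring : r' + k * p' = p * k + r), hr'⟩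
  exact ⟨h₁.symm.trans h₃, h₂.symm.trans h₄⟩

theorem greedy_le_sum_of_exchange {g : ℕ → ℝ} (hg₀ : g 0 = 0)
    (hg : ∀ {a b c}, c ≤ a → c ≤ b → g c + g (a + b - c) ≤ g a + g b) {k : ℕ} :
    ∀ {M : ℕ} (s : Fin M → ℕ), (∀ i, s i ≤ k) → ∀ {p r : ℕ}, r < k →
      ∑ i, s i = p * k + r → p * g k + g r ≤ ∑ i, g (s i)
  | 0, _, _, p, r, hr, hsum => by
    obtain ⟨rfl, rfl⟩ := Nat.eq_and_eq_of_mul_add_eq hr (by omega : 0 < k)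
      (by simpa using hsum.symm : p * k + r = 0 * k + 0)
    simp [hg₀]
  | M + 1, s, hs, p, r, hr, hsum => by
    rw [Fin.sum_univ_succ] at hsum ⊢
    have hk : 0 < k := by omega
    obtain ⟨q, m, hm, hn⟩ : ∃ q m, m < k ∧ ∑ i : Fin M, s i.succ = q * k + m :=
      ⟨_, _, Nat.mod_lt _ hk, (Nat.div_add_mod' _ k).symm⟩
    have ih := greedy_le_sum_of_exchange hg₀ hg (fun i => s i.succ) (fun i => hs i.succ) hm hn
    have hx := hs 0
    -- Either the first block fits next to the remainder `m` of the others, or the two of them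
    -- make up one more full block of size `k`.
    by_cases hlt : s 0 + m < k
    · obtain ⟨rfl, rfl⟩ := Nat.eq_and_eq_of_mul_add_eq (p := p) (p' := q) hr hlt (by linarith)
      have := hg (a := s 0) (b := m) (Nat.zero_le _) (Nat.zero_le _)
      rw [hg₀, zero_add, Nat.sub_zero] at this
      linarith
    · obtain ⟨c, hc⟩ := Nat.exists_eq_add_of_le (not_lt.1 hlt)
      obtain ⟨rfl, rfl⟩ := Nat.eq_and_eq_of_mul_add_eq (p := p) (p' := q + 1) (r' := c) hr
        (by omega) (by linarith)
      have := hg (a := s 0) (b := m) (c := r) (by omega) (by omega)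
      rw [show s 0 + m - r = k by omega] at this
      push_cast
      linarith

theorem stmt18_general (d k p r : ℕ) (hd : d = p * k + r) (hr : r < k)
    (σ : ℝ) (hσ : σ ∈ Set.Ioo (0 : ℝ) 1) :
    (∀ (M : ℕ) (s : Fin M → ℕ), (∀ i, 1 ≤ s i) → (∑ i, s i) = d →
      klGauss (Amat d σ) (structMatrix s (Amat d σ))
        = (1 / 2) * ((∑ i : Fin M, Real.log ((1 + ((s i : ℝ) - 1) * σ) / (1 - σ)))
            - Real.log ((1 + ((d : ℝ) - 1) * σ) / (1 - σ)))) ∧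
    (∀ (M : ℕ) (s : Fin M → ℕ), (∀ i, 1 ≤ s i) → (∀ i, s i ≤ k) → (∑ i, s i) = d →
      klGauss (Amat d σ)
          (structMatrix (fun m : Fin (p + 1) => if (m : ℕ) < p then k else r) (Amat d σ))
        ≤ klGauss (Amat d σ) (structMatrix s (Amat d σ))) := by
  obtain ⟨h₀, h₁⟩ := hσ
  have hkl : ∀ (M : ℕ) (s : Fin M → ℕ), ∑ i, s i = d →
      klGauss (Amat d σ) (structMatrix s (Amat d σ))
        = 1 / 2 * (∑ i, equicorrelationLogFactor σ (s i) - equicorrelationLogFactor σ d) := by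
    rintro M s rfl
    exact klGauss_amat_structMatrix s h₀.le h₁
  refine ⟨fun M s _ hsum => hkl M s hsum, fun M s _ hsk hsum => ?_⟩
  have hgreedy := greedy_le_sum_of_exchange (equicorrelationLogFactor_zero h₁.ne)
    (equicorrelationLogFactor_exchange h₀.le h₁) s hsk hr (hsum.trans hd)
  rw [hkl _ _ (by simp [Fin.sum_univ_castSucc, hd]), hkl M s hsum]
  simp only [Fin.sum_univ_castSucc, Fin.val_castSucc, Fin.is_lt, if_true, Fin.val_last,
    lt_irrefl, if_false, Finset.sum_const, Finset.card_univ, Fintype.card_fin, nsmul_eq_mul]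
  linarith

/-- for `Σ = A^d_σ`, `σ ∈ (0,1)`, and a structure `s = (s₁,…,s_M)` of
positive integers summing to `d`,
`KL(f_Σ ‖ f_{Σ_{P_s}}) = (1/2)(∑ᵢ log((1+(sᵢ-1)σ)/(1-σ)) - log((1+(d-1)σ)/(1-σ)))`;
moreover among all structures with blocks of size at most `k < d`, the KL is minimized
by `s* = (k,…,k,r)` with `p` blocks of size `k`, where `d = pk + r`, `0 ≤ r < k`. -/
theorem stmt18 (d k p r : ℕ) (hk : 0 < k) (hkd : k < d) (hd : d = p * k + r) (hr : r < k)
    (σ : ℝ) (hσ : σ ∈ Set.Ioo (0 : ℝ) 1) :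
    (∀ (M : ℕ) (s : Fin M → ℕ), (∀ i, 1 ≤ s i) → (∑ i, s i) = d →
      klGauss (Amat d σ) (structMatrix s (Amat d σ))
        = (1 / 2) * ((∑ i : Fin M, Real.log ((1 + ((s i : ℝ) - 1) * σ) / (1 - σ)))
            - Real.log ((1 + ((d : ℝ) - 1) * σ) / (1 - σ)))) ∧
    (∀ (M : ℕ) (s : Fin M → ℕ), (∀ i, 1 ≤ s i) → (∀ i, s i ≤ k) → (∑ i, s i) = d →
      klGauss (Amat d σ)
          (structMatrix (fun m : Fin (p + 1) => if (m : ℕ) < p then k else r) (Amat d σ))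
        ≤ klGauss (Amat d σ) (structMatrix s (Amat d σ))) :=
  stmt18_general d k p r hd hr σ hσ
end
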